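/- arXiv:1906.09531 — 3 statements merged into one kernel-verified Lean document; each statement's English description precedes it below -/
import Mathlib

section
/- With the setup of the resampled model p_{θ,φ} ∝ p_θ·ŵ: the resampled model improves (does not worsen) the KL fit, i.e. KL(p_data ‖ p_{θ,φ}) ≤ KL(p_data ‖ p_θ), if and only if E_{x∼p_data}[log ŵ(x)] ≥ log E_{x∼p_θ}[ŵ(x)]. -/
open MeasureTheory

/-! Pointwise, `log (p / (pθ ŵ / Z)) = log (p / pθ) - log ŵ + log Z` wherever `p ≠ 0`, since absolute
continuity makes `pθ ≠ 0` there. Integrating against `p_data` gives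
`KL(p_data ‖ p_{θ,φ}) = KL(p_data ‖ pθ) - E_{p_data}[log ŵ] + log Z`, and the equivalence is read off. -/

theorem mul_log_div_mul_div {a b c z : ℝ} (hab : b = 0 → a = 0) (hc : c ≠ 0) (hz : z ≠ 0) :
    a * Real.log (a / (b * c / z)) = a * Real.log (a / b) - a * Real.log c + a * Real.log z := by
  rcases eq_or_ne a 0 with rfl | ha
  · simp
  have hb : b ≠ 0 := mt hab ha
  rw [div_div_eq_mul_div, Real.log_div (mul_ne_zero ha hz) (mul_ne_zero hb hc),
    Real.log_mul ha hz, Real.log_mul hb hc, Real.log_div ha hb]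
  ring

theorem integral_mul_log_div_tilt {X : Type*} [MeasurableSpace X] {μ : Measure X}
    {p q w : X → ℝ} {z : ℝ} (habs : ∀ x, q x = 0 → p x = 0) (hw : ∀ x, w x ≠ 0) (hz : z ≠ 0)
    (hp : ∫ x, p x ∂μ = 1) (hpq : Integrable (fun x => p x * Real.log (p x / q x)) μ)
    (hpw : Integrable (fun x => p x * Real.log (w x)) μ) :
    ∫ x, p x * Real.log (p x / (q x * w x / z)) ∂μ
      = ∫ x, p x * Real.log (p x / q x) ∂μ - ∫ x, p x * Real.log (w x) ∂μ + Real.log z := by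
  have hp_int : Integrable p μ := .of_integral_ne_zero (by simp [hp])
  calc ∫ x, p x * Real.log (p x / (q x * w x / z)) ∂μ
      = ∫ x, (p x * Real.log (p x / q x) - p x * Real.log (w x) + p x * Real.log z) ∂μ :=
        integral_congr_ae (.of_forall fun x => mul_log_div_mul_div (habs x) (hw x) hz)
    _ = ∫ x, p x * Real.log (p x / q x) ∂μ - ∫ x, p x * Real.log (w x) ∂μ + Real.log z := by
        have hdiff : Integrable (fun x => p x * Real.log (p x / q x) - p x * Real.log (w x)) μ :=
          hpq.sub hpw
        rw [integral_add hdiff (hp_int.mul_const _), integral_sub hpq hpw,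
          integral_mul_const, hp, one_mul]

theorem resampling_improves_kl_iff_general
    {X : Type*} [MeasurableSpace X] (μ : Measure X)
    (pdata pθ w : X → ℝ) (Z : ℝ)
    (hpdata1 : ∫ x, pdata x ∂μ = 1)
    (habs : ∀ x, pθ x = 0 → pdata x = 0)
    (hw : ∀ x, 0 < w x)
    (hZ : Z = ∫ x, pθ x * w x ∂μ) (hZpos : 0 < Z)
    (pφ : X → ℝ) (hpφ : ∀ x, pφ x = pθ x * w x / Z)
    (hint2 : Integrable (fun x => pdata x * Real.log (pdata x / pθ x)) μ)
    (hint3 : Integrable (fun x => pdata x * Real.log (w x)) μ) :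
    (∫ x, pdata x * Real.log (pdata x / pφ x) ∂μ)
      ≤ (∫ x, pdata x * Real.log (pdata x / pθ x) ∂μ)
    ↔ (∫ x, pdata x * Real.log (w x) ∂μ) ≥ Real.log (∫ x, pθ x * w x ∂μ) := by
  simp_rw [hpφ, integral_mul_log_div_tilt habs (fun x => (hw x).ne') hZpos.ne' hpdata1 hint2 hint3,
    ← hZ]
  constructor <;> intro h <;> linarith

/-- The importance resampled model `p_{θ,φ} ∝ pθ · ŵ` does not worsen the KL fit to
`p_data` if and only if `E_{p_data}[log ŵ] ≥ log E_{pθ}[ŵ]`. -/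
theorem resampling_improves_kl_iff
    {X : Type*} [MeasurableSpace X] (μ : Measure X)
    (pdata pθ w : X → ℝ) (Z : ℝ)
    (hpdata : ∀ x, 0 ≤ pdata x) (hpθ : ∀ x, 0 ≤ pθ x)
    (hpdata1 : ∫ x, pdata x ∂μ = 1) (hpθ1 : ∫ x, pθ x ∂μ = 1)
    (habs : ∀ x, pθ x = 0 → pdata x = 0)
    (hw : ∀ x, 0 < w x)
    (hZ : Z = ∫ x, pθ x * w x ∂μ) (hZpos : 0 < Z)
    (hZfin : Integrable (fun x => pθ x * w x) μ)
    (pφ : X → ℝ) (hpφ : ∀ x, pφ x = pθ x * w x / Z)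
    (hint1 : Integrable (fun x => pdata x * Real.log (pdata x / pφ x)) μ)
    (hint2 : Integrable (fun x => pdata x * Real.log (pdata x / pθ x)) μ)
    (hint3 : Integrable (fun x => pdata x * Real.log (w x)) μ) :
    (∫ x, pdata x * Real.log (pdata x / pφ x) ∂μ)
      ≤ (∫ x, pdata x * Real.log (pdata x / pθ x) ∂μ)
    ↔ (∫ x, pdata x * Real.log (w x) ∂μ) ≥ Real.log (∫ x, pθ x * w x ∂μ) :=
  resampling_improves_kl_iff_general μ pdata pθ w Z hpdata1 habs hw hZ hZpos pφ hpφ hint2 hint3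
end

section
/- (Proposition 1, condition 1) If KL(p_data ‖ p_{θ,φ}) ≤ KL(p_data ‖ p_θ), then E_{x∼p_data}[ŵ(x)] ≥ E_{x∼p_θ}[ŵ(x)]. -/
/-!
Since `p_{θ,φ} = pθ · ŵ / Z`, the two KL divergences differ by `log Z - E_{p_data}[log ŵ]`, so the
hypothesis says `log Z ≤ E_{p_data}[log ŵ]`. By Jensen's inequality for the concave logarithm,
`E_{p_data}[log ŵ] ≤ log E_{p_data}[ŵ]`, and `log` is monotone.
-/

open MeasureTheory

section

variable {X : Type*} [MeasurableSpace X] {μ : Measure X}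

theorem mul_log_div_mul_div_s5 {p q w Z : ℝ} (hq : q = 0 → p = 0) (hw : w ≠ 0) (hZ : Z ≠ 0) :
    p * Real.log (p / (q * w / Z)) = p * Real.log (p / q) - p * Real.log w + p * Real.log Z := by
  by_cases hp : p = 0
  · simp [hp]
  have hq : q ≠ 0 := mt hq hp
  rw [div_div_eq_mul_div, Real.log_div (mul_ne_zero hp hZ) (mul_ne_zero hq hw), Real.log_mul hp hZ,
    Real.log_mul hq hw, Real.log_div hp hq]
  ring

theorem integral_mul_log_div_mul_div {p q w : X → ℝ} {Z : ℝ} (hp1 : ∫ x, p x ∂μ = 1)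
    (hq : ∀ x, q x = 0 → p x = 0) (hw : ∀ x, w x ≠ 0) (hZ : Z ≠ 0)
    (hpq : Integrable (fun x => p x * Real.log (p x / q x)) μ)
    (hpw : Integrable (fun x => p x * Real.log (w x)) μ) :
    ∫ x, p x * Real.log (p x / (q x * w x / Z)) ∂μ
      = (∫ x, p x * Real.log (p x / q x) ∂μ) - (∫ x, p x * Real.log (w x) ∂μ) + Real.log Z := by
  have hp : Integrable p μ := .of_integral_ne_zero (by simp [hp1])
  have hdiff : Integrable (fun x => p x * Real.log (p x / q x) - p x * Real.log (w x)) μ :=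
    hpq.sub hpw
  simp_rw [mul_log_div_mul_div_s5 (hq _) (hw _) hZ]
  rw [integral_add hdiff (hp.mul_const _), integral_sub hpq hpw, integral_mul_const, hp1,
    one_mul]

theorem integral_mul_pos_of_pos {p w : X → ℝ} (hp : ∀ x, 0 ≤ p x) (hp0 : 0 < ∫ x, p x ∂μ)
    (hw : ∀ x, 0 < w x) (hpw : Integrable (fun x => p x * w x) μ) :
    0 < ∫ x, p x * w x ∂μ := by
  have hpint : Integrable p μ := .of_integral_ne_zero hp0.ne'
  have hsupp : Function.support (fun x => p x * w x) = Function.support p := by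
    ext x; simp [(hw x).ne']
  rw [integral_pos_iff_support_of_nonneg (fun x => mul_nonneg (hp x) (hw x).le) hpw, hsupp,
    ← integral_pos_iff_support_of_nonneg hp hpint]
  exact hp0

/-- Jensen's inequality for `log`, via the tangent line `log t ≤ log c + t / c - 1` at
`c = E_p[w]`. -/
theorem integral_mul_log_le_log_integral_mul {p w : X → ℝ} (hp : ∀ x, 0 ≤ p x)
    (hp1 : ∫ x, p x ∂μ = 1) (hw : ∀ x, 0 < w x) (hpw : Integrable (fun x => p x * w x) μ)
    (hplogw : Integrable (fun x => p x * Real.log (w x)) μ) :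
    ∫ x, p x * Real.log (w x) ∂μ ≤ Real.log (∫ x, p x * w x ∂μ) := by
  set c := ∫ x, p x * w x ∂μ
  have hc : 0 < c := integral_mul_pos_of_pos hp (by simp [hp1]) hw hpw
  have hpint : Integrable p μ := .of_integral_ne_zero (by simp [hp1])
  have htangent : ∀ x, p x * Real.log (w x) ≤ p x * (w x) * c⁻¹ + p x * (Real.log c - 1) := by
    intro x
    have := Real.log_le_sub_one_of_pos (div_pos (hw x) hc)
    rw [Real.log_div (hw x).ne' hc.ne', div_eq_mul_inv] at this
    linarith [mul_le_mul_of_nonneg_left this (hp x)]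
  calc ∫ x, p x * Real.log (w x) ∂μ
      ≤ ∫ x, p x * w x * c⁻¹ + p x * (Real.log c - 1) ∂μ :=
        integral_mono hplogw ((hpw.mul_const _).add (hpint.mul_const _)) htangent
    _ = Real.log c := by
        rw [integral_add (hpw.mul_const _) (hpint.mul_const _), integral_mul_const,
          integral_mul_const, hp1, mul_inv_cancel₀ hc.ne']
        ring

end

theorem resampling_necessary_condition_weights_general
    {X : Type*} [MeasurableSpace X] (μ : Measure X)
    (pdata pθ w : X → ℝ) (Z : ℝ)
    (hpdata : ∀ x, 0 ≤ pdata x)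
    (hpdata1 : ∫ x, pdata x ∂μ = 1)
    (habs : ∀ x, pθ x = 0 → pdata x = 0)
    (hw : ∀ x, 0 < w x)
    (hZ : Z = ∫ x, pθ x * w x ∂μ) (hZpos : 0 < Z)
    (hwdata : Integrable (fun x => pdata x * w x) μ)
    (pφ : X → ℝ) (hpφ : ∀ x, pφ x = pθ x * w x / Z)
    (hint2 : Integrable (fun x => pdata x * Real.log (pdata x / pθ x)) μ)
    (hint3 : Integrable (fun x => pdata x * Real.log (w x)) μ)
    (hkl : (∫ x, pdata x * Real.log (pdata x / pφ x) ∂μ)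
      ≤ (∫ x, pdata x * Real.log (pdata x / pθ x) ∂μ)) :
    (∫ x, pdata x * w x ∂μ) ≥ ∫ x, pθ x * w x ∂μ := by
  have hlogZ : Real.log Z ≤ ∫ x, pdata x * Real.log (w x) ∂μ := by
    simp_rw [hpφ, integral_mul_log_div_mul_div hpdata1 habs (fun x => (hw x).ne') hZpos.ne' hint2
      hint3] at hkl
    linarith
  have hjensen := integral_mul_log_le_log_integral_mul hpdata hpdata1 hw hwdata hint3
  rw [← hZ]
  exact (Real.log_le_log_iff hZpos (integral_mul_pos_of_pos hpdata (by simp [hpdata1]) hw hwdata)).mp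
    (hlogZ.trans hjensen)

/-- Proposition 1, condition 1: if the importance resampled model `p_{θ,φ} ∝ pθ · ŵ`
does not worsen the KL fit to `p_data`, then `E_{p_data}[ŵ] ≥ E_{pθ}[ŵ]`. -/
theorem resampling_necessary_condition_weights
    {X : Type*} [MeasurableSpace X] (μ : Measure X)
    (pdata pθ w : X → ℝ) (Z : ℝ)
    (hpdata : ∀ x, 0 ≤ pdata x) (hpθ : ∀ x, 0 ≤ pθ x)
    (hpdata1 : ∫ x, pdata x ∂μ = 1) (hpθ1 : ∫ x, pθ x ∂μ = 1)
    (habs : ∀ x, pθ x = 0 → pdata x = 0)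
    (hw : ∀ x, 0 < w x)
    (hZ : Z = ∫ x, pθ x * w x ∂μ) (hZpos : 0 < Z)
    (hZfin : Integrable (fun x => pθ x * w x) μ)
    (hwdata : Integrable (fun x => pdata x * w x) μ)
    (pφ : X → ℝ) (hpφ : ∀ x, pφ x = pθ x * w x / Z)
    (hint1 : Integrable (fun x => pdata x * Real.log (pdata x / pφ x)) μ)
    (hint2 : Integrable (fun x => pdata x * Real.log (pdata x / pθ x)) μ)
    (hint3 : Integrable (fun x => pdata x * Real.log (w x)) μ)
    (hkl : (∫ x, pdata x * Real.log (pdata x / pφ x) ∂μ)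
      ≤ (∫ x, pdata x * Real.log (pdata x / pθ x) ∂μ)) :
    (∫ x, pdata x * w x ∂μ) ≥ ∫ x, pθ x * w x ∂μ :=
  resampling_necessary_condition_weights_general μ pdata pθ w Z hpdata hpdata1 habs hw hZ hZpos
    hwdata pφ hpφ hint2 hint3 hkl
end

section
/- The density of the sample returned by SIR with T particles is p^SIR(x; T) = E_{x_2,…,x_T ∼ p_θ}[ ŵ(x)/(ŵ(x) + ∑_{i=2}^T ŵ(x_i)) ] · T · p_θ(x), and it integrates to 1 over X. -/
/-!
Integrating against `pθ x dμ` turns the outer integral into an expectation over `x₁ ∼ pθ`, so the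
left-hand side is `T · E[ŵ(x₁) / ∑ᵢ ŵ(xᵢ)]` over `T` i.i.d. particles: `T` times the expected
probability that SIR selects particle `1`. The product measure is invariant under permuting the
particles, so every particle has the same expected selection probability, and these `T`
probabilities sum to `1`; hence each one is `1 / T`.
-/

open MeasureTheory Finset

section WithDensity

variable {X : Type*} [MeasurableSpace X] {μ : Measure X} {p : X → ℝ}

lemma isProbabilityMeasure_withDensity_ofReal (hp : 0 ≤ᵐ[μ] p) (hp1 : ∫ x, p x ∂μ = 1) :
    IsProbabilityMeasure (μ.withDensity fun x => ENNReal.ofReal (p x)) := by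
  have hp_int : Integrable p μ := .of_integral_ne_zero (by simp [hp1])
  constructor
  rw [withDensity_apply _ MeasurableSet.univ, setLIntegral_univ,
    ← ofReal_integral_eq_lintegral_ofReal hp_int hp, hp1, ENNReal.ofReal_one]

lemma integral_withDensity_ofReal (hp_meas : AEMeasurable p μ) (hp : ∀ x, 0 ≤ p x)
    (g : X → ℝ) :
    ∫ x, g x ∂μ.withDensity (fun x => ENNReal.ofReal (p x)) = ∫ x, g x * p x ∂μ := by
  rw [integral_withDensity_eq_integral_toReal_smul₀ hp_meas.ennreal_ofReal
    (Filter.Eventually.of_forall fun _ => ENNReal.ofReal_lt_top)]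
  simp only [ENNReal.toReal_ofReal (hp _), smul_eq_mul, mul_comm]

end WithDensity

section ProductMeasure

variable {X E : Type*} [MeasurableSpace X] [NormedAddCommGroup E] [NormedSpace ℝ E]

lemma integral_pi_comp_perm {ι : Type*} [Fintype ι] (μ : Measure X) [SigmaFinite μ]
    (e : Equiv.Perm ι) (f : (ι → X) → E) :
    ∫ y, f (y ∘ e) ∂Measure.pi (fun _ => μ) = ∫ y, f y ∂Measure.pi (fun _ => μ) := by
  convert (measurePreserving_piCongrLeft (fun _ : ι => μ) e.symm).integral_comp' f using 3 with y
  congr 1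
  funext i
  simpa using (MeasurableEquiv.piCongrLeft_apply_apply (β := fun _ => X) e.symm y (e i)).symm

lemma integral_integral_fin_cons {n : ℕ} (ν : Measure X) [SigmaFinite ν]
    {g : (Fin (n + 1) → X) → E} (hg : Integrable g (Measure.pi fun _ => ν)) :
    ∫ x, ∫ ω, g (Fin.cons x ω) ∂Measure.pi (fun _ => ν) ∂ν =
      ∫ y, g y ∂Measure.pi (fun _ => ν) := by
  have h_cons : ⇑(MeasurableEquiv.piFinSuccAbove (fun _ => X) 0).symm =
      fun z : X × (Fin n → X) => Fin.cons z.1 z.2 := by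
    ext z : 1
    simp only [MeasurableEquiv.piFinSuccAbove_symm_apply, Fin.insertNthEquiv, Equiv.coe_fn_mk,
      Fin.insertNth_zero']
  have h_mp := (measurePreserving_piFinSuccAbove (fun _ : Fin (n + 1) => ν) 0).symm
  have h_emb :=
    (MeasurableEquiv.piFinSuccAbove (fun _ : Fin (n + 1) => X) 0).symm.measurableEmbedding
  rw [h_cons] at h_mp h_emb
  rw [← h_mp.integral_comp h_emb]
  exact (integral_prod _ ((h_mp.integrable_comp_emb h_emb).mpr hg)).symm

end ProductMeasure

section SelectionProb

variable {ι X : Type*} [Fintype ι] {w : X → ℝ}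

noncomputable def selectionProb (w : X → ℝ) (y : ι → X) (j : ι) : ℝ :=
  w (y j) / ∑ i, w (y i)

lemma selectionProb_nonneg (hw : ∀ x, 0 < w x) (y : ι → X) (j : ι) :
    0 ≤ selectionProb w y j :=
  div_nonneg (hw _).le (sum_nonneg fun _ _ => (hw _).le)

lemma selectionProb_le_one (hw : ∀ x, 0 < w x) (y : ι → X) (j : ι) :
    selectionProb w y j ≤ 1 :=
  div_le_one_of_le₀ (single_le_sum (fun i _ => (hw (y i)).le) (mem_univ j))
    (sum_nonneg fun _ _ => (hw _).le)

lemma sum_selectionProb [Nonempty ι] (hw : ∀ x, 0 < w x) (y : ι → X) :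
    ∑ j, selectionProb w y j = 1 := by
  simp only [selectionProb, ← sum_div]
  exact div_self (sum_pos (fun i _ => hw (y i)) univ_nonempty).ne'

lemma selectionProb_comp_perm (y : ι → X) (e : Equiv.Perm ι) (j : ι) :
    selectionProb w (y ∘ e) j = selectionProb w y (e j) := by
  simp only [selectionProb, Function.comp_apply, Equiv.sum_comp e (fun i => w (y i))]

variable [MeasurableSpace X]

lemma measurable_selectionProb (hw : Measurable w) (j : ι) :
    Measurable fun y : ι → X => selectionProb w y j :=
  (hw.comp (measurable_pi_apply j)).div
    (Finset.measurable_sum _ fun i _ => hw.comp (measurable_pi_apply i))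

lemma integrable_selectionProb (μ : Measure (ι → X)) [IsFiniteMeasure μ]
    (hw_meas : Measurable w) (hw : ∀ x, 0 < w x) (j : ι) :
    Integrable (fun y => selectionProb w y j) μ :=
  (integrable_const (1 : ℝ)).mono' (measurable_selectionProb hw_meas j).aestronglyMeasurable
    (Filter.Eventually.of_forall fun y => by
      rw [Real.norm_of_nonneg (selectionProb_nonneg hw y j)]
      exact selectionProb_le_one hw y j)

lemma integral_selectionProb (ν : Measure X) [IsProbabilityMeasure ν] [Nonempty ι]
    (hw_meas : Measurable w) (hw : ∀ x, 0 < w x) (j : ι) :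
    ∫ y, selectionProb w y j ∂Measure.pi (fun _ => ν) = (Fintype.card ι : ℝ)⁻¹ := by
  classical
  have h_eq (k : ι) : ∫ y, selectionProb w y k ∂Measure.pi (fun _ => ν)
      = ∫ y, selectionProb w y j ∂Measure.pi (fun _ => ν) := by
    rw [← integral_pi_comp_perm ν (Equiv.swap j k)]
    simp only [selectionProb_comp_perm, Equiv.swap_apply_right]
  have h_sum : ∑ k : ι, ∫ y, selectionProb w y k ∂Measure.pi (fun _ => ν) = 1 := by
    rw [← integral_finsetSum _ fun k _ => integrable_selectionProb _ hw_meas hw k]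
    simp [sum_selectionProb hw]
  rw [Finset.sum_congr rfl fun k _ => h_eq k, sum_const, card_univ, nsmul_eq_mul] at h_sum
  exact eq_inv_of_mul_eq_one_right h_sum

end SelectionProb

theorem sir_density_integrates_to_one_general
    {X : Type*} [MeasurableSpace X] (μ : Measure X)
    (pθ : X → ℝ) (w : X → ℝ) (ν : Measure X) (T : ℕ) (hT : 1 ≤ T)
    (hpθ : ∀ x, 0 ≤ pθ x) (hpθ1 : ∫ x, pθ x ∂μ = 1)
    (hν : ν = μ.withDensity fun x => ENNReal.ofReal (pθ x))
    (hw_meas : Measurable w) (hw : ∀ x, 0 < w x) :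
    ∫ x, (∫ ω : Fin (T - 1) → X, w x / (w x + ∑ i, w (ω i))
        ∂(Measure.pi fun _ => ν)) * T * pθ x ∂μ = 1 := by
  have hpθ_int : Integrable pθ μ := .of_integral_ne_zero (by simp [hpθ1])
  have : IsProbabilityMeasure ν :=
    hν ▸ isProbabilityMeasure_withDensity_ofReal (ae_of_all _ hpθ) hpθ1
  obtain ⟨n, rfl⟩ := Nat.exists_eq_add_of_le' hT
  show ∫ x, (∫ ω : Fin n → X, w x / (w x + ∑ i, w (ω i)) ∂Measure.pi fun _ => ν)
    * ((n + 1 : ℕ) : ℝ) * pθ x ∂μ = 1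
  have h_cons (x : X) (ω : Fin n → X) :
      w x / (w x + ∑ i, w (ω i)) = selectionProb w (Fin.cons x ω : Fin (n + 1) → X) 0 := by
    simp [selectionProb, Fin.sum_univ_succ]
  have h_outer := integral_withDensity_ofReal hpθ_int.aemeasurable hpθ fun x =>
    (∫ ω : Fin n → X, selectionProb w (Fin.cons x ω : Fin (n + 1) → X) 0
      ∂Measure.pi (fun _ => ν)) * (n + 1 : ℕ)
  rw [← hν] at h_outer
  simp_rw [h_cons, ← h_outer, integral_mul_const, integral_integral_fin_cons ν
    (integrable_selectionProb _ hw_meas hw 0), integral_selectionProb ν hw_meas hw,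
    Fintype.card_fin]
  exact inv_mul_cancel₀ (by positivity)

/-- The SIR density with `T` particles,
`p^SIR(x; T) = E_{x₂,…,x_T ∼ pθ}[ ŵ(x) / (ŵ(x) + ∑ᵢ ŵ(xᵢ)) ] · T · pθ(x)`,
integrates to `1` over `X`. -/
theorem sir_density_integrates_to_one
    {X : Type*} [MeasurableSpace X] (μ : Measure X)
    (pθ : X → ℝ) (w : X → ℝ) (ν : Measure X) (T : ℕ) (hT : 1 ≤ T)
    (hpθ_meas : Measurable pθ) (hpθ : ∀ x, 0 ≤ pθ x) (hpθ1 : ∫ x, pθ x ∂μ = 1)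
    (hν : ν = μ.withDensity fun x => ENNReal.ofReal (pθ x))
    (hw_meas : Measurable w) (hw : ∀ x, 0 < w x)
    (hbdd : ∃ C : ℝ, ∀ x, w x ≤ C) :
    ∫ x, (∫ ω : Fin (T - 1) → X, w x / (w x + ∑ i, w (ω i))
        ∂(Measure.pi fun _ => ν)) * T * pθ x ∂μ = 1 :=
  sir_density_integrates_to_one_general μ pθ w ν T hT hpθ hpθ1 hν hw_meas hw
end
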